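/- arXiv:2310.20471 — 3 statements merged into one kernel-verified Lean document; each statement's English description precedes it below -/
import Mathlib

section
/- Square-root Gronwall inequality, contraction form: Let C > 0, b ≥ 0, T > 0, and let ξ : [0,T] → ℝ be differentiable with ξ(t) ≥ 0 for all t ∈ [0,T] and ξ′(t) ≤ −2C·ξ(t) + 2b·√(ξ(t)) for all t ∈ [0,T]. Then √(ξ(t)) ≤ √(ξ(0))·e^{−Ct} + b/C for every t ∈ [0,T]. -/
/-!
Regularize: for `η > 0` the function `φ = √(ξ + η²)` is differentiable (even where `ξ` vanishes)
and the hypothesis gives the linear inequality `φ' + C φ ≤ b + C η`. The linear Gronwall bound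
`φ t ≤ (φ 0 - K/C) e^{-Ct} + K/C`, obtained from the monotonicity of `(φ - K/C) e^{Cs}`, then yields
`√(ξ t) ≤ √(ξ 0) e^{-Ct} + b/C + η`, and `η → 0` finishes.
-/

open Real Set

section LinearGronwall

variable {D : Set ℝ} {φ φ' : ℝ → ℝ} {C K : ℝ}

theorem antitoneOn_sub_div_mul_exp_of_deriv_add_mul_le (hC : C ≠ 0) (hD : Convex ℝ D)
    (hφ : ∀ s ∈ D, HasDerivWithinAt φ (φ' s) D s) (hle : ∀ s ∈ D, φ' s + C * φ s ≤ K) :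
    AntitoneOn (fun s => (φ s - K / C) * exp (C * s)) D := by
  have hψ : ∀ s ∈ D, HasDerivWithinAt (fun s => (φ s - K / C) * exp (C * s))
      ((φ' s + C * φ s - K) * exp (C * s)) D s := by
    intro s hs
    have hexp : HasDerivWithinAt (fun u => exp (C * u)) (exp (C * s) * C) D s :=
      ((hasDerivAt_id s).const_mul C).exp.hasDerivWithinAt.congr_deriv (by simp)
    refine (((hφ s hs).sub_const (K / C)).mul hexp).congr_deriv ?_
    field_simp
    ring
  refine antitoneOn_of_hasDerivWithinAt_nonpos hD (fun s hs => (hψ s hs).continuousWithinAt)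
    (fun s hs => (hψ s (interior_subset hs)).mono interior_subset) fun s hs => ?_
  exact mul_nonpos_of_nonpos_of_nonneg (by linarith [hle s (interior_subset hs)]) (exp_pos _).le

theorem le_exp_mul_add_of_deriv_add_mul_le (hC : C ≠ 0) (hD : Convex ℝ D)
    (hφ : ∀ s ∈ D, HasDerivWithinAt φ (φ' s) D s) (hle : ∀ s ∈ D, φ' s + C * φ s ≤ K)
    {s t : ℝ} (hs : s ∈ D) (ht : t ∈ D) (hst : s ≤ t) :
    φ t ≤ (φ s - K / C) * exp (-C * (t - s)) + K / C := by
  have hmono := antitoneOn_sub_div_mul_exp_of_deriv_add_mul_le hC hD hφ hle hs ht hst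
  have key : φ t - K / C ≤ (φ s - K / C) * exp (-C * (t - s)) := by
    have h := mul_le_mul_of_nonneg_right hmono (exp_pos (-C * t)).le
    rwa [mul_assoc, mul_assoc, ← exp_add, ← exp_add, show C * t + -C * t = 0 by ring,
      exp_zero, mul_one, show C * s + -C * t = -C * (t - s) by ring] at h
  linarith

end LinearGronwall

theorem div_two_sqrt_add_sq_add_mul_sqrt_add_sq_le {C b x d η : ℝ} (hC : 0 ≤ C) (hb : 0 ≤ b)
    (hx : 0 ≤ x) (hη : 0 < η) (hd : d ≤ -2 * C * x + 2 * b * √x) :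
    d / (2 * √(x + η ^ 2)) + C * √(x + η ^ 2) ≤ b + C * η := by
  set r := √(x + η ^ 2)
  have hr : 0 < r := sqrt_pos.mpr (by positivity)
  have hr_sq : r ^ 2 = x + η ^ 2 := sq_sqrt (by positivity)
  have hx_le : √x ≤ r := sqrt_le_sqrt (le_add_of_nonneg_right (sq_nonneg η))
  have hη_le : η ≤ r := le_sqrt_of_sq_le (by linarith)
  rw [div_add' _ _ _ (by positivity), div_le_iff₀ (by positivity)]
  nlinarith [mul_le_mul_of_nonneg_left hx_le hb, mul_le_mul_of_nonneg_left hη_le hC]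

theorem sqrt_le_sqrt_mul_exp_add_div_add {C b T η : ℝ} (hC : 0 < C) (hb : 0 ≤ b) (hη : 0 < η)
    {ξ ξ' : ℝ → ℝ}
    (hderiv : ∀ t ∈ Icc 0 T, HasDerivWithinAt ξ (ξ' t) (Icc 0 T) t)
    (hpos : ∀ t ∈ Icc 0 T, 0 ≤ ξ t)
    (hineq : ∀ t ∈ Icc 0 T, ξ' t ≤ -2 * C * ξ t + 2 * b * √(ξ t))
    {t : ℝ} (ht : t ∈ Icc 0 T) :
    √(ξ t) ≤ √(ξ 0) * exp (-C * t) + b / C + η := by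
  have h0 : (0 : ℝ) ∈ Icc 0 T := ⟨le_rfl, ht.1.trans ht.2⟩
  have hφ : ∀ s ∈ Icc 0 T, HasDerivWithinAt (fun s => √(ξ s + η ^ 2))
      (ξ' s / (2 * √(ξ s + η ^ 2))) (Icc 0 T) s := fun s hs =>
    ((hderiv s hs).add_const _).sqrt (by linarith [hpos s hs, pow_pos hη 2])
  have hgron := le_exp_mul_add_of_deriv_add_mul_le hC.ne' (convex_Icc 0 T) hφ
    (fun s hs => div_two_sqrt_add_sq_add_mul_sqrt_add_sq_le hC.le hb (hpos s hs) hη (hineq s hs))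
    h0 ht ht.1
  have hKC : (b + C * η) / C = b / C + η := by field_simp
  have he : exp (-C * t) ≤ 1 := exp_le_one_iff.mpr (by nlinarith [ht.1])
  have hφ0 : √(ξ 0 + η ^ 2) ≤ √(ξ 0) + η := by
    rw [sqrt_le_left (by positivity)]
    nlinarith [sq_sqrt (hpos 0 h0), sqrt_nonneg (ξ 0)]
  calc √(ξ t) ≤ √(ξ t + η ^ 2) := sqrt_le_sqrt (le_add_of_nonneg_right (sq_nonneg η))
    _ ≤ (√(ξ 0 + η ^ 2) - (b + C * η) / C) * exp (-C * (t - 0)) + (b + C * η) / C := hgron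
    _ = √(ξ 0 + η ^ 2) * exp (-C * t) + (b / C + η) * (1 - exp (-C * t)) := by
        rw [hKC, sub_zero]; ring
    _ ≤ (√(ξ 0) + η) * exp (-C * t) + (b / C + η) * (1 - exp (-C * t)) := by
        gcongr
    _ ≤ √(ξ 0) * exp (-C * t) + b / C + η := by
        nlinarith [exp_pos (-C * t), div_nonneg hb hC.le]

theorem stmt_1_general (C b T : ℝ) (hC : 0 < C) (hb : 0 ≤ b)
    (ξ ξ' : ℝ → ℝ)
    (hderiv : ∀ t ∈ Set.Icc (0:ℝ) T, HasDerivWithinAt ξ (ξ' t) (Set.Icc 0 T) t)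
    (hpos : ∀ t ∈ Set.Icc (0:ℝ) T, 0 ≤ ξ t)
    (hineq : ∀ t ∈ Set.Icc (0:ℝ) T,
      ξ' t ≤ -2 * C * ξ t + 2 * b * Real.sqrt (ξ t)) :
    ∀ t ∈ Set.Icc (0:ℝ) T,
      Real.sqrt (ξ t) ≤ Real.sqrt (ξ 0) * Real.exp (-C * t) + b / C :=
  fun _ ht => le_of_forall_pos_le_add fun _ hη =>
    sqrt_le_sqrt_mul_exp_add_div_add hC hb hη hderiv hpos hineq ht

/-- Square-root Gronwall inequality, contraction form. -/
theorem stmt_1 (C b T : ℝ) (hC : 0 < C) (hb : 0 ≤ b) (hT : 0 < T)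
    (ξ ξ' : ℝ → ℝ)
    (hderiv : ∀ t ∈ Set.Icc (0:ℝ) T, HasDerivWithinAt ξ (ξ' t) (Set.Icc 0 T) t)
    (hpos : ∀ t ∈ Set.Icc (0:ℝ) T, 0 ≤ ξ t)
    (hineq : ∀ t ∈ Set.Icc (0:ℝ) T,
      ξ' t ≤ -2 * C * ξ t + 2 * b * Real.sqrt (ξ t)) :
    ∀ t ∈ Set.Icc (0:ℝ) T,
      Real.sqrt (ξ t) ≤ Real.sqrt (ξ 0) * Real.exp (-C * t) + b / C :=
  stmt_1_general C b T hC hb ξ ξ' hderiv hpos hineq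
end

section
/- Square-root Gronwall inequality, expansion form: Let L > 0, b ≥ 0, T > 0, and let ξ : [0,T] → ℝ be differentiable with ξ(t) ≥ 0 for all t ∈ [0,T] and ξ′(t) ≤ 2L·ξ(t) + 2b·√(ξ(t)) for all t ∈ [0,T]. Then √(ξ(t)) ≤ √(ξ(0))·e^{Lt} + (b/L)·(e^{Lt} − 1) for every t ∈ [0,T]. -/
/-! Regularise: `g = √(ξ + c)` with `c > 0` is differentiable even where `ξ` vanishes, with
`g' = ξ' / (2g) ≤ L g + b`, so the linear Gronwall bound applies to `g`; then let `c → 0`. -/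

open Set Filter Topology

theorem gronwallBound_continuous_δ (K ε x : ℝ) : Continuous fun δ => gronwallBound δ K ε x := by
  unfold gronwallBound
  split_ifs <;> fun_prop

theorem le_gronwallBound_of_hasDerivWithinAt_Icc {f f' : ℝ → ℝ} {δ K ε a b : ℝ}
    (hf : ∀ x ∈ Icc a b, HasDerivWithinAt f (f' x) (Icc a b) x) (ha : f a ≤ δ)
    (bound : ∀ x ∈ Ico a b, f' x ≤ K * f x + ε) :
    ∀ x ∈ Icc a b, f x ≤ gronwallBound δ K ε (x - a) := by
  refine le_gronwallBound_of_liminf_deriv_right_le (fun x hx => (hf x hx).continuousWithinAt)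
    (fun x hx r hr => ?_) ha bound
  have hIci : HasDerivWithinAt f (f' x) (Ici x) x :=
    (hf x (Ico_subset_Icc_self hx)).mono_of_mem_nhdsWithin (Icc_mem_nhdsGE_of_mem hx)
  exact hIci.liminf_right_slope_le hr

theorem div_two_sqrt_add_le {x c y L B : ℝ} (hx : 0 ≤ x) (hc : 0 < c) (hL : 0 ≤ L) (hB : 0 ≤ B)
    (hy : y ≤ 2 * L * x + 2 * B * √x) :
    y / (2 * √(x + c)) ≤ L * √(x + c) + B := by
  have hxc : 0 < x + c := by linarith
  rw [div_le_iff₀ (by positivity)]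
  calc y ≤ 2 * L * x + 2 * B * √x := hy
    _ ≤ 2 * L * (x + c) + 2 * B * √(x + c) := by gcongr <;> linarith
    _ = (L * √(x + c) + B) * (2 * √(x + c)) := by
      linear_combination (-2 * L) * Real.mul_self_sqrt hxc.le

theorem sqrt_le_gronwallBound_of_deriv_le {ξ ξ' : ℝ → ℝ} {L B a b : ℝ} (hL : 0 ≤ L) (hB : 0 ≤ B)
    (hderiv : ∀ t ∈ Icc a b, HasDerivWithinAt ξ (ξ' t) (Icc a b) t)
    (hpos : ∀ t ∈ Icc a b, 0 ≤ ξ t)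
    (hineq : ∀ t ∈ Ico a b, ξ' t ≤ 2 * L * ξ t + 2 * B * √(ξ t)) :
    ∀ t ∈ Icc a b, √(ξ t) ≤ gronwallBound (√(ξ a)) L B (t - a) := by
  intro t ht
  have hreg : ∀ c > 0, √(ξ t) ≤ gronwallBound (√(ξ a + c)) L B (t - a) := by
    intro c hc
    have hderiv_reg : ∀ s ∈ Icc a b, HasDerivWithinAt (fun u => √(ξ u + c))
        (ξ' s / (2 * √(ξ s + c))) (Icc a b) s := fun s hs =>
      ((hderiv s hs).add_const c).sqrt (by linarith [hpos s hs])
    calc √(ξ t) ≤ √(ξ t + c) := Real.sqrt_le_sqrt (by linarith)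
      _ ≤ gronwallBound (√(ξ a + c)) L B (t - a) :=
        le_gronwallBound_of_hasDerivWithinAt_Icc hderiv_reg le_rfl
          (fun s hs => div_two_sqrt_add_le (hpos s (Ico_subset_Icc_self hs)) hc hL hB
            (hineq s hs)) t ht
  have hlim : Tendsto (fun c => gronwallBound (√(ξ a + c)) L B (t - a)) (𝓝[>] 0)
      (𝓝 (gronwallBound (√(ξ a)) L B (t - a))) := by
    exact tendsto_nhdsWithin_of_tendsto_nhds <| ((gronwallBound_continuous_δ L B (t - a)).comp
      (Real.continuous_sqrt.comp (continuous_const_add (ξ a)))).tendsto' 0 _ (by simp)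
  exact ge_of_tendsto hlim (eventually_nhdsWithin_of_forall hreg)

theorem stmt_3_general (L b T : ℝ) (hL : 0 < L) (hb : 0 ≤ b)
    (ξ ξ' : ℝ → ℝ)
    (hderiv : ∀ t ∈ Set.Icc (0:ℝ) T, HasDerivWithinAt ξ (ξ' t) (Set.Icc 0 T) t)
    (hpos : ∀ t ∈ Set.Icc (0:ℝ) T, 0 ≤ ξ t)
    (hineq : ∀ t ∈ Set.Icc (0:ℝ) T,
      ξ' t ≤ 2 * L * ξ t + 2 * b * Real.sqrt (ξ t)) :
    ∀ t ∈ Set.Icc (0:ℝ) T,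
      Real.sqrt (ξ t) ≤ Real.sqrt (ξ 0) * Real.exp (L * t) +
        (b / L) * (Real.exp (L * t) - 1) := by
  intro t ht
  have h := sqrt_le_gronwallBound_of_deriv_le hL.le hb hderiv hpos
    (fun s hs => hineq s (Ico_subset_Icc_self hs)) t ht
  simpa only [sub_zero, gronwallBound_of_K_ne_0 hL.ne'] using h

/-- Square-root Gronwall inequality, expansion form. -/
theorem stmt_3 (L b T : ℝ) (hL : 0 < L) (hb : 0 ≤ b) (hT : 0 < T)
    (ξ ξ' : ℝ → ℝ)
    (hderiv : ∀ t ∈ Set.Icc (0:ℝ) T, HasDerivWithinAt ξ (ξ' t) (Set.Icc 0 T) t)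
    (hpos : ∀ t ∈ Set.Icc (0:ℝ) T, 0 ≤ ξ t)
    (hineq : ∀ t ∈ Set.Icc (0:ℝ) T,
      ξ' t ≤ 2 * L * ξ t + 2 * b * Real.sqrt (ξ t)) :
    ∀ t ∈ Set.Icc (0:ℝ) T,
      Real.sqrt (ξ t) ≤ Real.sqrt (ξ 0) * Real.exp (L * t) +
        (b / L) * (Real.exp (L * t) - 1) :=
  stmt_3_general L b T hL hb ξ ξ' hderiv hpos hineq
end

section
/- Wasserstein-type bound for locally Lipschitz convolutions (Step 2 of Lemma 6.1): Let d ≥ 1, let r ≥ 1 be an integer, and let C′ > 0, M > 0, B > 0. Let f : ℝ^d → ℝ^d satisfy |f(x) − f(y)| ≤ C′·|x − y|·(1 + |x|^{2r−1} + |y|^{2r−1}) for all x, y ∈ ℝ^d. Then there exists a constant K > 0, depending only on C′, r, M and B, such that for every probability measure μ on ℝ^d with ∫ |z|^{4r−2} dμ(z) ≤ M and for all x, a ∈ ℝ^d with |x| ≤ B and |a| ≤ B, one has ∫ |f(x − z) − f(x − a)| dμ(z) ≤ K·(∫ |z − a|² dμ(z))^{1/2}. -/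
/-!
Write `c = 2 ^ (n - 1)` with `n = 2r - 1`. For `‖x‖, ‖a‖ ≤ B` the growth bound on `f` and
`(s + t) ^ n ≤ c (s ^ n + t ^ n)` give the pointwise estimate
`‖f (x - z) - f (x - a)‖ ≤ C' ‖z - a‖ (1 + 3 c B ^ n + c ‖z‖ ^ n)`.
Integrating and applying Cauchy–Schwarz bounds the left side by `C' ‖z - a‖_{L²(μ)}` times the
`L²(μ)` norm of the weight, which is controlled by the moment `∫ ‖z‖ ^ (2n) dμ ≤ M`.
-/

open MeasureTheory

theorem integral_mul_le_sqrt_integral_sq_mul_sqrt_integral_sq {α : Type*} [MeasurableSpace α]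
    {μ : Measure α} {u w : α → ℝ} (hu₀ : 0 ≤ᵐ[μ] u) (hw₀ : 0 ≤ᵐ[μ] w) (hu : MemLp u 2 μ)
    (hw : MemLp w 2 μ) :
    ∫ a, u a * w a ∂μ ≤ √(∫ a, u a ^ 2 ∂μ) * √(∫ a, w a ^ 2 ∂μ) := by
  have h := integral_mul_le_Lp_mul_Lq_of_nonneg Real.HolderConjugate.two_two hu₀ hw₀
    (by simpa using hu) (by simpa using hw)
  simpa only [Real.rpow_two, ← Real.sqrt_eq_rpow] using h

section PolynomialGrowth

variable {E F : Type*} [NormedAddCommGroup E] [NormedAddCommGroup F]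

theorem norm_sub_pow_le_of_norm_le {x : E} {B : ℝ} (hx : ‖x‖ ≤ B) (z : E) (n : ℕ) :
    ‖x - z‖ ^ n ≤ 2 ^ (n - 1) * (B ^ n + ‖z‖ ^ n) :=
  calc ‖x - z‖ ^ n ≤ (B + ‖z‖) ^ n := by
        gcongr
        exact (norm_sub_le x z).trans (by linarith)
    _ ≤ 2 ^ (n - 1) * (B ^ n + ‖z‖ ^ n) := add_pow_le ((norm_nonneg x).trans hx) (norm_nonneg z) n

theorem norm_comp_sub_sub_comp_sub_le {f : E → F} {C B : ℝ} {n : ℕ} (hC : 0 ≤ C)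
    (hf : ∀ x y, ‖f x - f y‖ ≤ C * ‖x - y‖ * (1 + ‖x‖ ^ n + ‖y‖ ^ n))
    {x a : E} (hx : ‖x‖ ≤ B) (ha : ‖a‖ ≤ B) (z : E) :
    ‖f (x - z) - f (x - a)‖ ≤
      C * (‖z - a‖ * (1 + 3 * 2 ^ (n - 1) * B ^ n + 2 ^ (n - 1) * ‖z‖ ^ n)) := by
  have hxz := norm_sub_pow_le_of_norm_le hx z n
  have hxa : ‖x - a‖ ^ n ≤ 2 ^ (n - 1) * (B ^ n + B ^ n) :=
    (norm_sub_pow_le_of_norm_le hx a n).trans (by gcongr)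
  calc ‖f (x - z) - f (x - a)‖
      ≤ C * ‖z - a‖ * (1 + ‖x - z‖ ^ n + ‖x - a‖ ^ n) := by
        simpa [norm_sub_rev a z] using hf (x - z) (x - a)
    _ ≤ C * ‖z - a‖ * (1 + 3 * 2 ^ (n - 1) * B ^ n + 2 ^ (n - 1) * ‖z‖ ^ n) :=
        mul_le_mul_of_nonneg_left (by linarith) (by positivity)
    _ = _ := by ring

variable [MeasurableSpace E] {μ : Measure E} {n : ℕ}

theorem integral_sq_add_mul_norm_pow_le [IsProbabilityMeasure μ]
    (hint : Integrable (fun z => ‖z‖ ^ (2 * n)) μ) (A c : ℝ) :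
    ∫ z, (A + c * ‖z‖ ^ n) ^ 2 ∂μ ≤ 2 * A ^ 2 + 2 * c ^ 2 * ∫ z, ‖z‖ ^ (2 * n) ∂μ := by
  have hdom : Integrable (fun z => 2 * A ^ 2 + 2 * c ^ 2 * ‖z‖ ^ (2 * n)) μ :=
    (integrable_const _).add (hint.const_mul _)
  calc ∫ z, (A + c * ‖z‖ ^ n) ^ 2 ∂μ
      ≤ ∫ z, 2 * A ^ 2 + 2 * c ^ 2 * ‖z‖ ^ (2 * n) ∂μ := by
        refine integral_mono_of_nonneg (Filter.Eventually.of_forall fun z => sq_nonneg _) hdom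
          (Filter.Eventually.of_forall fun z => ?_)
        calc (A + c * ‖z‖ ^ n) ^ 2 ≤ 2 * (A ^ 2 + (c * ‖z‖ ^ n) ^ 2) := add_sq_le
          _ = 2 * A ^ 2 + 2 * c ^ 2 * ‖z‖ ^ (2 * n) := by ring
    _ = 2 * A ^ 2 + 2 * c ^ 2 * ∫ z, ‖z‖ ^ (2 * n) ∂μ := by
        rw [integral_add (integrable_const _) (hint.const_mul _), integral_const,
          integral_const_mul]
        simp

variable [BorelSpace E]

theorem memLp_two_norm_pow_of_integrable [IsFiniteMeasure μ] {k : ℕ} (hk : k ≤ n)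
    (hint : Integrable (fun z => ‖z‖ ^ (2 * n)) μ) : MemLp (fun z => ‖z‖ ^ k) 2 μ := by
  have hmeas : AEStronglyMeasurable (fun z : E => ‖z‖) μ := continuous_norm.aestronglyMeasurable
  refine (memLp_two_iff_integrable_sq (continuous_norm.pow k).aestronglyMeasurable).2 ?_
  simpa only [Pi.pow_apply, ← pow_mul, norm_norm] using
    integrable_norm_pow_of_le hmeas (p := k * 2) (q := 2 * n) (by omega)
      (by simpa only [norm_norm] using hint)

theorem memLp_two_norm_sub_of_integrable [IsFiniteMeasure μ] (hn : 1 ≤ n)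
    (hint : Integrable (fun z => ‖z‖ ^ (2 * n)) μ) (a : E) : MemLp (fun z => ‖z - a‖) 2 μ := by
  have hdom : MemLp (fun z => ‖z‖ ^ 1 + ‖a‖) 2 μ :=
    (memLp_two_norm_pow_of_integrable hn hint).add (memLp_const ‖a‖)
  refine hdom.of_le (continuous_id.sub continuous_const).norm.aestronglyMeasurable
    (Filter.Eventually.of_forall fun z => ?_)
  simpa [abs_of_nonneg (add_nonneg (norm_nonneg z) (norm_nonneg a))] using norm_sub_le z a

theorem integral_norm_comp_sub_sub_comp_sub_le [IsProbabilityMeasure μ] {f : E → F} {C B M : ℝ}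
    (hn : 1 ≤ n) (hC : 0 ≤ C) (hf : ∀ x y, ‖f x - f y‖ ≤ C * ‖x - y‖ * (1 + ‖x‖ ^ n + ‖y‖ ^ n))
    (hint : Integrable (fun z => ‖z‖ ^ (2 * n)) μ) (hM : ∫ z, ‖z‖ ^ (2 * n) ∂μ ≤ M)
    {x a : E} (hx : ‖x‖ ≤ B) (ha : ‖a‖ ≤ B) :
    ∫ z, ‖f (x - z) - f (x - a)‖ ∂μ ≤
      C * √(2 * (1 + 3 * 2 ^ (n - 1) * B ^ n) ^ 2 + 2 * (2 ^ (n - 1)) ^ 2 * M) *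
        √(∫ z, ‖z - a‖ ^ 2 ∂μ) := by
  set A : ℝ := 1 + 3 * 2 ^ (n - 1) * B ^ n
  set c : ℝ := 2 ^ (n - 1)
  have hu := memLp_two_norm_sub_of_integrable hn hint a
  have hw : MemLp (fun z => A + c * ‖z‖ ^ n) 2 μ :=
    (memLp_const A).add ((memLp_two_norm_pow_of_integrable le_rfl hint).const_mul c)
  have hw₀ : ∀ z : E, 0 ≤ A + c * ‖z‖ ^ n := fun z => by
    have hB : 0 ≤ B := (norm_nonneg x).trans hx
    positivity
  have hw_sq : ∫ z, (A + c * ‖z‖ ^ n) ^ 2 ∂μ ≤ 2 * A ^ 2 + 2 * c ^ 2 * M :=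
    (integral_sq_add_mul_norm_pow_le hint A c).trans (by gcongr)
  calc ∫ z, ‖f (x - z) - f (x - a)‖ ∂μ
      ≤ ∫ z, C * (‖z - a‖ * (A + c * ‖z‖ ^ n)) ∂μ :=
        integral_mono_of_nonneg (Filter.Eventually.of_forall fun z => norm_nonneg _)
          ((hu.integrable_mul hw).const_mul C)
          (Filter.Eventually.of_forall (norm_comp_sub_sub_comp_sub_le hC hf hx ha))
    _ = C * ∫ z, ‖z - a‖ * (A + c * ‖z‖ ^ n) ∂μ := integral_const_mul C _
    _ ≤ C * (√(∫ z, ‖z - a‖ ^ 2 ∂μ) * √(∫ z, (A + c * ‖z‖ ^ n) ^ 2 ∂μ)) := by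
        gcongr
        exact integral_mul_le_sqrt_integral_sq_mul_sqrt_integral_sq
          (Filter.Eventually.of_forall fun z => norm_nonneg _)
          (Filter.Eventually.of_forall hw₀) hu hw
    _ ≤ C * (√(∫ z, ‖z - a‖ ^ 2 ∂μ) * √(2 * A ^ 2 + 2 * c ^ 2 * M)) := by gcongr
    _ = _ := by ring

end PolynomialGrowth

theorem stmt_5_general (d : ℕ) (r : ℕ) (hr : 1 ≤ r)
    (C' M B : ℝ) (hC' : 0 < C') (hM : 0 < M) (hB : 0 < B)
    (f : EuclideanSpace ℝ (Fin d) → EuclideanSpace ℝ (Fin d))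
    (hf : ∀ x y, ‖f x - f y‖ ≤
      C' * ‖x - y‖ * (1 + ‖x‖ ^ (2 * r - 1) + ‖y‖ ^ (2 * r - 1))) :
    ∃ K > (0:ℝ), ∀ μ : Measure (EuclideanSpace ℝ (Fin d)),
      IsProbabilityMeasure μ →
      Integrable (fun z => ‖z‖ ^ (4 * r - 2)) μ →
      (∫ z, ‖z‖ ^ (4 * r - 2) ∂μ) ≤ M →
      ∀ x a : EuclideanSpace ℝ (Fin d), ‖x‖ ≤ B → ‖a‖ ≤ B →
        (∫ z, ‖f (x - z) - f (x - a)‖ ∂μ) ≤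
          K * Real.sqrt (∫ z, ‖z - a‖ ^ 2 ∂μ) := by
  set n := 2 * r - 1
  have h2n : 4 * r - 2 = 2 * n := by omega
  refine ⟨C' * √(2 * (1 + 3 * 2 ^ (n - 1) * B ^ n) ^ 2 + 2 * (2 ^ (n - 1)) ^ 2 * M),
    by positivity, fun μ _ hint hμM x a hx ha => ?_⟩
  rw [h2n] at hint hμM
  exact integral_norm_comp_sub_sub_comp_sub_le (by omega) hC'.le hf hint hμM hx ha

/-- Wasserstein-type bound for locally Lipschitz convolutions (Step 2 of Lemma 6.1). -/
theorem stmt_5 (d : ℕ) (hd : 1 ≤ d) (r : ℕ) (hr : 1 ≤ r)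
    (C' M B : ℝ) (hC' : 0 < C') (hM : 0 < M) (hB : 0 < B)
    (f : EuclideanSpace ℝ (Fin d) → EuclideanSpace ℝ (Fin d))
    (hf : ∀ x y, ‖f x - f y‖ ≤
      C' * ‖x - y‖ * (1 + ‖x‖ ^ (2 * r - 1) + ‖y‖ ^ (2 * r - 1))) :
    ∃ K > (0:ℝ), ∀ μ : Measure (EuclideanSpace ℝ (Fin d)),
      IsProbabilityMeasure μ →
      Integrable (fun z => ‖z‖ ^ (4 * r - 2)) μ →
      (∫ z, ‖z‖ ^ (4 * r - 2) ∂μ) ≤ M →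
      ∀ x a : EuclideanSpace ℝ (Fin d), ‖x‖ ≤ B → ‖a‖ ≤ B →
        (∫ z, ‖f (x - z) - f (x - a)‖ ∂μ) ≤
          K * Real.sqrt (∫ z, ‖z - a‖ ^ 2 ∂μ) :=
  stmt_5_general d r hr C' M B hC' hM hB f hf
end
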